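/- arXiv:1509.02478 — 2 statements merged into one kernel-verified Lean document; each statement's English description precedes it below -/
import Mathlib

section
/- For a finite tree with n edges, the unique Green walk (of length 2n) splits into exactly two distinct double-stepped Green walks, each of length n. -/
/-!
A ribbon graph is encoded as a combinatorial map on a finite set `H` of half-edges:
`sigma` is the fixed-point-free involution pairing the two half-edges of each edge,
and `rho` is the permutation whose cycles are the cyclic orderings of the half-edges
around each vertex.  Edges are the orbits of `sigma`, vertices the orbits of `rho`.
The Green walk step sends a half-edge `x` at a vertex `v` to the half-edge `y`
whose opposite half-edge is the successor `rho x` of `x` at `v`, i.e. `y = sigma (rho x)`.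
-/

structure RibbonGraph (H : Type) where
  sigma : Equiv.Perm H
  rho : Equiv.Perm H
  invol : ∀ x, sigma (sigma x) = x
  noFix : ∀ x, sigma x ≠ x
  conn : ∀ x y, Relation.EqvGen (fun a b => sigma a = b ∨ rho a = b) x y

/-- The orbit ("same cycle") setoid of a permutation. -/
def sameCycleSetoid {H : Type} (π : Equiv.Perm H) : Setoid H :=
  ⟨π.SameCycle, ⟨fun x => Equiv.Perm.SameCycle.refl π x, fun h => h.symm,
    fun h₁ h₂ => h₁.trans h₂⟩⟩

namespace RibbonGraph

variable {H : Type}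

/-- The step map of the (anticlockwise) Green walk: `x ↦ sigma (rho x)`. -/
def step (G : RibbonGraph H) : Equiv.Perm H := G.rho.trans G.sigma

/-- The step map of the clockwise Green walk: `x ↦ sigma (rho⁻¹ x)`. -/
def stepC (G : RibbonGraph H) : Equiv.Perm H := G.rho.symm.trans G.sigma

/-- The number of edges: the number of orbits of the involution `sigma`. -/
noncomputable def numEdges (G : RibbonGraph H) : ℕ := Nat.card (Quotient (sameCycleSetoid G.sigma))

/-- The number of vertices: the number of orbits of `rho`. -/
noncomputable def numVertices (G : RibbonGraph H) : ℕ := Nat.card (Quotient (sameCycleSetoid G.rho))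

/-- A (connected) ribbon graph is a tree when `#vertices = #edges + 1`. -/
def IsTree (G : RibbonGraph H) : Prop := G.numVertices = G.numEdges + 1

/-- A half-edge `x` spans a bridge if its edge `{x, sigma x}` disconnects the graph:
there is no walk from `x` to `sigma x` avoiding that edge. -/
def IsBridge (G : RibbonGraph H) (x₀ : H) : Prop :=
  ¬ Relation.ReflTransGen
      (fun a b => G.rho a = b ∨ G.rho b = a ∨ (G.sigma a = b ∧ a ≠ x₀ ∧ a ≠ G.sigma x₀))
      x₀ (G.sigma x₀)

end RibbonGraph

/-!
The faces of a ribbon graph are the cycles of the Green-walk step `σρ`. For any two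
permutations `σ, ρ` of a finite set `H` the hypermap Euler inequality
`V + E + F ≤ 2 K + |H|` holds, where `V, E, F` count the cycles of `ρ, σ, σρ` (fixed points
included) and `K` the orbits of `⟨σ, ρ⟩`. It follows by peeling transpositions off `σ`:
left multiplication by a transposition `(a b)` changes the number of cycles by one, merging
them exactly when `a` and `b` lie in different cycles. For a tree `V = E + 1`, `K = 1` and
`|H| = 2E`, so `F = 1`: the Green walk is one cycle of length `2n`, and the square of a
cycle of even length `2n` splits into two cycles of length `n`.
-/

open Equiv Function Relation

namespace Setoid

variable {α : Type*}

/-- The equivalence relation generated by `s` and the pair `(a, b)`, in closed form. -/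
def identify (s : Setoid α) (a b : α) : Setoid α where
  r x y := s x y ∨ ((s x a ∨ s x b) ∧ (s y a ∨ s y b))
  iseqv :=
    { refl := fun x => Or.inl (s.refl x)
      symm := fun h => h.imp s.symm And.symm
      trans := by
        rintro x y z (hxy | ⟨hx, hy⟩) (hyz | ⟨hy', hz⟩)
        · exact Or.inl (s.trans hxy hyz)
        · exact Or.inr ⟨hy'.imp (s.trans hxy) (s.trans hxy), hz⟩
        · exact Or.inr ⟨hx, hy.imp (s.trans (s.symm hyz)) (s.trans (s.symm hyz))⟩
        · exact Or.inr ⟨hx, hz⟩ }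

variable {s t : Setoid α} {a b : α}

theorem le_identify : s ≤ s.identify a b := fun _ _ => Or.inl

theorem identify_rel : s.identify a b a b := Or.inr ⟨Or.inl (s.refl a), Or.inr (s.refl b)⟩

theorem identify_le (hst : s ≤ t) (hab : t a b) : s.identify a b ≤ t := by
  have hb : ∀ {x}, s x a ∨ s x b → t x b := fun h =>
    h.elim (fun h => t.trans (hst h) hab) (@hst _ _)
  rintro x y (h | ⟨hx, hy⟩)
  · exact hst h
  · exact t.trans (hb hx) (t.symm (hb hy))

theorem identify_eq_self (h : s a b) : s.identify a b = s :=
  le_antisymm (identify_le le_rfl h) le_identify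

theorem rel_swap_apply [DecidableEq α] (h : t a b) (y : α) : t y (swap a b y) := by
  rw [swap_apply_def]
  split_ifs with hya hyb
  · exact hya ▸ h
  · exact hyb ▸ t.symm h
  · exact t.refl y

theorem card_quotient_le_of_le [Finite α] (h : s ≤ t) :
    Nat.card (Quotient t) ≤ Nat.card (Quotient s) :=
  Nat.card_le_card_of_surjective (Setoid.map_of_le h) (Quotient.ind fun x => ⟨⟦x⟧, rfl⟩)

theorem card_quotient_le_card_quotient_identify_add_one [Finite α] :
    Nat.card (Quotient s) ≤ Nat.card (Quotient (s.identify a b)) + 1 := by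
  classical
  have := Fintype.ofFinite α
  have hinj : Set.InjOn (Setoid.map_of_le (le_identify (a := a) (b := b)))
      ((Finset.univ.erase (⟦b⟧ : Quotient s) : Finset (Quotient s)) : Set (Quotient s)) := by
    refine Quotient.ind fun x hx => Quotient.ind fun y hy hxy => Quotient.sound ?_
    have hxb : ¬ s x b := fun h => (Finset.mem_erase.mp hx).1 (Quotient.sound h)
    have hyb : ¬ s y b := fun h => (Finset.mem_erase.mp hy).1 (Quotient.sound h)
    rcases Quotient.exact hxy with h | ⟨hx, hy⟩
    · exact h
    · exact s.trans (hx.resolve_right hxb) (s.symm (hy.resolve_right hyb))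
  have := Finset.card_le_card_of_injOn _ (fun _ _ => Finset.mem_coe.2 (Finset.mem_univ _)) hinj
  rw [Finset.card_erase_of_mem (Finset.mem_univ _), Finset.card_univ, Finset.card_univ] at this
  simp only [Nat.card_eq_fintype_card]
  omega

theorem card_quotient_identify_lt [Finite α] (h : ¬ s a b) :
    Nat.card (Quotient (s.identify a b)) < Nat.card (Quotient s) := by
  have := Fintype.ofFinite (Quotient s)
  have := Fintype.ofFinite (Quotient (s.identify a b))
  simp only [Nat.card_eq_fintype_card]
  refine Fintype.card_lt_of_surjective_not_injective (Setoid.map_of_le le_identify)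
    (Quotient.ind fun x => ⟨⟦x⟧, rfl⟩) fun hinj => h (Quotient.exact (hinj ?_))
  exact Quotient.sound identify_rel

end Setoid

namespace Equiv.Perm

variable {α : Type}

/-- Fixed points count as cycles. -/
noncomputable def numCycles (π : Perm α) : ℕ := Nat.card (Quotient (sameCycleSetoid π))

theorem sameCycleSetoid_le {π : Perm α} {s : Setoid α} (h : ∀ x, s x (π x)) :
    sameCycleSetoid π ≤ s := by
  have hinv : ∀ x, s x (π⁻¹ x) := fun x => s.symm (by simpa using h (π⁻¹ x))
  rintro x _ ⟨i, rfl⟩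
  induction i using Int.induction_on with
  | zero => exact s.refl x
  | succ i ih => exact s.trans ih (by rw [add_comm, zpow_add, zpow_one, mul_apply]; exact h _)
  | pred i ih =>
    exact s.trans ih (by rw [sub_eq_neg_add, zpow_add, zpow_neg_one, mul_apply]; exact hinv _)

theorem numCycles_one [Finite α] : numCycles (1 : Perm α) = Nat.card α :=
  (Nat.card_eq_of_bijective _
    ⟨fun _ _ h => sameCycle_one.1 (Quotient.exact h), Quotient.mk_surjective⟩).symm

theorem sameCycle_of_numCycles_le_one [Finite α] {π : Perm α} (h : π.numCycles ≤ 1)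
    (x y : α) : π.SameCycle x y :=
  have := Finite.card_le_one_iff_subsingleton.1 h
  Quotient.exact (Subsingleton.elim (⟦x⟧ : Quotient (sameCycleSetoid π)) ⟦y⟧)

theorem minimalPeriod_eq_card_sameCycle [Finite α] (π : Perm α) (x : α) :
    minimalPeriod π x = Nat.card {y // π.SameCycle x y} := by
  classical
  have := Fintype.ofFinite α
  have horbit : MulAction.orbit (Subgroup.zpowers π) x = {y | π.SameCycle x y} := by
    ext y
    simp [MulAction.mem_orbit_iff, Subgroup.smul_def, Perm.smul_def, SameCycle]
  rw [show (⇑π) = (π • ·) from rfl, MulAction.minimalPeriod_eq_card,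
    ← Nat.card_eq_fintype_card]
  exact Nat.card_congr (Equiv.setCongr horbit)

theorem card_eq_mul_numCycles [Finite α] {π : Perm α} {d : ℕ}
    (h : ∀ x, minimalPeriod π x = d) :
    Nat.card α = d * π.numCycles := by
  classical
  have := Fintype.ofFinite (Quotient (sameCycleSetoid π))
  have hfiber (q : Quotient (sameCycleSetoid π)) : Nat.card {x // ⟦x⟧ = q} = d := by
    rw [← h q.out, minimalPeriod_eq_card_sameCycle]
    refine Nat.card_congr (Equiv.subtypeEquivRight fun x => ?_)
    rw [← Quotient.out_eq q, Quotient.eq, Quotient.out_eq]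
    exact ⟨fun h => h.symm, fun h => h.symm⟩
  rw [← Nat.card_congr (Equiv.sigmaFiberEquiv (Quotient.mk (sameCycleSetoid π))), Nat.card_sigma]
  simp [hfiber, numCycles, Nat.card_eq_fintype_card, mul_comm]

section Swap

variable [DecidableEq α]

theorem sameCycle_swap_mul_of_not_sameCycle [Finite α] {π : Perm α} {a b : α}
    (h : ¬π.SameCycle a b) : (swap a b * π).SameCycle b a := by
  -- The `π`-orbit of `b` avoids `a`, so `(a b) π` follows it until it returns to `b`,
  -- which `(a b)` sends to `a` instead.
  set r := minimalPeriod π b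
  have hr : 0 < r := minimalPeriod_pos_of_mem_periodicPts (π.injective.mem_periodicPts b)
  have agree : ∀ j < r, (swap a b * π)^[j] b = π^[j] b := by
    intro j
    induction j with
    | zero => simp
    | succ j ih =>
      intro hj
      have hb : π^[j + 1] b ≠ b := not_isPeriodicPt_of_pos_of_lt_minimalPeriod j.succ_ne_zero hj
      have hcyc : π.SameCycle b (π^[j + 1] b) := by
        rw [iterate_eq_pow]; exact sameCycle_pow_right.2 (SameCycle.refl π b)
      have ha : π^[j + 1] b ≠ a := fun he => h (he ▸ hcyc).symm
      rw [iterate_succ_apply', ih (by omega), mul_apply, ← iterate_succ_apply' π,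
        swap_apply_of_ne_of_ne ha hb]
  refine ⟨r, ?_⟩
  obtain ⟨k, hk⟩ : ∃ k, r = k + 1 := ⟨r - 1, by omega⟩
  have hper : π (π^[k] b) = b := by
    rw [← iterate_succ_apply' (⇑π) k b, ← Nat.add_one, ← hk]
    exact iterate_minimalPeriod
  rw [zpow_natCast, ← iterate_eq_pow, hk, iterate_succ_apply', agree k (by omega), mul_apply,
    hper, swap_apply_right]

theorem sameCycleSetoid_le_identify_swap_mul (π : Perm α) (a b : α) :
    sameCycleSetoid π ≤ (sameCycleSetoid (swap a b * π)).identify a b :=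
  sameCycleSetoid_le fun x =>
    (Setoid.identify _ a b).trans (Setoid.le_identify (SameCycle.refl _ x |>.trans ⟨1, rfl⟩))
      ((Setoid.identify _ a b).symm (Setoid.rel_swap_apply Setoid.identify_rel (π x)))

theorem numCycles_swap_mul_le [Finite α] (π : Perm α) (a b : α) :
    (swap a b * π).numCycles ≤ π.numCycles + 1 :=
  Setoid.card_quotient_le_card_quotient_identify_add_one.trans <| Nat.add_le_add_right
    (Setoid.card_quotient_le_of_le (sameCycleSetoid_le_identify_swap_mul π a b)) 1

theorem numCycles_swap_mul_lt [Finite α] {π : Perm α} {a b : α} (h : ¬π.SameCycle a b) :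
    (swap a b * π).numCycles < π.numCycles := by
  have hmerge : (swap a b * π).SameCycle a b := (sameCycle_swap_mul_of_not_sameCycle h).symm
  have hle : sameCycleSetoid π ≤ sameCycleSetoid (swap a b * π) := by
    simpa only [Setoid.identify_eq_self (s := sameCycleSetoid (swap a b * π)) hmerge] using
      sameCycleSetoid_le_identify_swap_mul π a b
  exact (Setoid.card_quotient_le_of_le (Setoid.identify_le hle hmerge)).trans_lt
    (Setoid.card_quotient_identify_lt h)

end Swap

def componentSetoid (σ ρ : Perm α) : Setoid α :=
  EqvGen.setoid fun x y => σ x = y ∨ ρ x = y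

variable {σ ρ : Perm α}

theorem componentSetoid_rel_left (x : α) : componentSetoid σ ρ x (σ x) :=
  EqvGen.rel _ _ (Or.inl rfl)

theorem componentSetoid_rel_right (x : α) : componentSetoid σ ρ x (ρ x) :=
  EqvGen.rel _ _ (Or.inr rfl)

theorem componentSetoid_one : componentSetoid 1 ρ = sameCycleSetoid ρ :=
  le_antisymm
    (Setoid.eqvGen_le <| by rintro x _ (rfl | rfl); exacts [SameCycle.refl _ _, ⟨1, rfl⟩])
    (sameCycleSetoid_le componentSetoid_rel_right)

theorem sameCycleSetoid_mul_le_componentSetoid :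
    sameCycleSetoid (σ * ρ) ≤ componentSetoid σ ρ :=
  sameCycleSetoid_le fun x =>
    (componentSetoid σ ρ).trans (componentSetoid_rel_right x) (componentSetoid_rel_left (ρ x))

theorem componentSetoid_swap_mul [DecidableEq α] {a b : α} (ha : σ a = a) :
    componentSetoid (swap a b * σ) ρ = (componentSetoid σ ρ).identify a b := by
  set t := componentSetoid (swap a b * σ) ρ
  have hab : t a b := by
    simpa [mul_apply, ha] using componentSetoid_rel_left (σ := swap a b * σ) (ρ := ρ) a
  apply le_antisymm
  · refine Setoid.eqvGen_le ?_
    rintro x _ (rfl | rfl)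
    · exact Setoid.trans' _ (Setoid.le_identify (componentSetoid_rel_left x))
        (Setoid.rel_swap_apply Setoid.identify_rel (σ x))
    · exact Setoid.le_identify (componentSetoid_rel_right x)
  · refine Setoid.identify_le (Setoid.eqvGen_le ?_) hab
    rintro x _ (rfl | rfl)
    · simpa [mul_apply] using
        t.trans (componentSetoid_rel_left x) (Setoid.rel_swap_apply hab ((swap a b * σ) x))
    · exact componentSetoid_rel_right x

theorem numCycles_add_numCycles_add_numCycles_mul_le [Finite α] (σ ρ : Perm α) :
    ρ.numCycles + σ.numCycles + (σ * ρ).numCycles ≤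
      2 * Nat.card (Quotient (componentSetoid σ ρ)) + Nat.card α := by
  classical
  have := Fintype.ofFinite α
  induction hn : σ.support.card using Nat.strong_induction_on generalizing σ with
  | _ n ih =>
  by_cases hσ1 : σ = 1
  · subst hσ1
    rw [one_mul, componentSetoid_one, numCycles_one]
    unfold numCycles
    omega
  -- `σ = (x b) σ'` with `σ' x = x`, so `σ` has one cycle fewer than `σ'`; `σρ` has at most
  -- one cycle more than `σ'ρ` if `K` is unchanged, and one cycle fewer if two components merge.
  obtain ⟨x, hx⟩ : ∃ x, σ x ≠ x := not_forall.1 fun h => hσ1 (ext h)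
  set b := σ x
  set σ' := swap x b * σ
  have hσ : σ = swap x b * σ' := (swap_mul_self_mul _ _ _).symm
  have hfix : σ' x = x := by simp [σ', b, mul_apply]
  have hIH := ih _ (hn ▸ card_support_swap_mul hx) σ' rfl
  have hσcyc : σ.numCycles < σ'.numCycles := by
    have := numCycles_swap_mul_lt (π := σ') (fun h => hx (h.eq_of_left hfix).symm)
    rwa [← hσ] at this
  have hK := componentSetoid_swap_mul (ρ := ρ) (b := b) hfix
  rw [← hσ] at hK
  have hmul : σ * ρ = swap x b * (σ' * ρ) := by rw [hσ, mul_assoc]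
  by_cases hxb : componentSetoid σ' ρ x b
  · rw [Setoid.identify_eq_self hxb] at hK
    have := numCycles_swap_mul_le (σ' * ρ) x b
    rw [← hmul] at this
    rw [hK]
    omega
  · have := numCycles_swap_mul_lt fun h => hxb (sameCycleSetoid_mul_le_componentSetoid h)
    rw [← hmul] at this
    have hKcard := Setoid.card_quotient_le_card_quotient_identify_add_one
      (s := componentSetoid σ' ρ) (a := x) (b := b)
    rw [← hK] at hKcard
    omega

end Equiv.Perm

open Equiv.Perm

namespace RibbonGraph

variable {H : Type} (G : RibbonGraph H)

theorem minimalPeriod_sigma (x : H) : minimalPeriod G.sigma x = 2 :=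
  minimalPeriod_eq_prime (p := 2) (G.invol x) (G.noFix x)

theorem card_eq_two_mul_numEdges [Finite H] : Nat.card H = 2 * G.numEdges :=
  card_eq_mul_numCycles G.minimalPeriod_sigma

theorem card_quotient_componentSetoid_le_one [Finite H] :
    Nat.card (Quotient (componentSetoid G.sigma G.rho)) ≤ 1 :=
  Finite.card_le_one_iff_subsingleton.2 ⟨Quotient.ind₂ fun x y => Quotient.sound (G.conn x y)⟩

theorem step_sameCycle_of_isTree [Finite H] (hT : G.IsTree) (x y : H) : G.step.SameCycle x y := by
  have hEuler := numCycles_add_numCycles_add_numCycles_mul_le G.sigma G.rho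
  have hK := G.card_quotient_componentSetoid_le_one
  have hH := G.card_eq_two_mul_numEdges
  have hV : G.rho.numCycles = G.sigma.numCycles + 1 := hT
  refine sameCycle_of_numCycles_le_one ?_ x y
  change (G.sigma * G.rho).numCycles ≤ 1
  change Nat.card H = 2 * G.sigma.numCycles at hH
  omega

end RibbonGraph

/-- For a finite tree with `n` edges, the unique Green walk (of
length `2 n`) splits into exactly two distinct double-stepped Green walks, each of
length `n`. -/
theorem tree_double_stepped_green_walks
    (H : Type) [Fintype H] [Nonempty H] (G : RibbonGraph H) (n : ℕ)
    (hE : G.numEdges = n) (hTree : G.IsTree) :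
    (∀ x y : H, G.step.SameCycle x y) ∧
      (∀ x : H, Function.minimalPeriod (⇑G.step) x = 2 * n) ∧
      Nat.card (Quotient (sameCycleSetoid (G.step ^ 2))) = 2 ∧
      (∀ x : H, Function.minimalPeriod (⇑(G.step ^ 2)) x = n) := by
  have hcyc := G.step_sameCycle_of_isTree hTree
  have hcard : Nat.card H = 2 * n := hE ▸ G.card_eq_two_mul_numEdges
  have hperiod (x : H) : minimalPeriod G.step x = 2 * n := by
    rw [minimalPeriod_eq_card_sameCycle, ← hcard]
    exact Nat.card_congr (Equiv.subtypeUnivEquiv (hcyc x))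
  have hperiod_sq (x : H) : minimalPeriod ⇑(G.step ^ 2) x = n := by
    rw [coe_pow, minimalPeriod_iterate_eq_div_gcd two_ne_zero, hperiod, Nat.gcd_mul_right_left]
    omega
  have hn : 0 < n := by
    have := Finite.card_pos (α := H)
    omega
  refine ⟨hcyc, hperiod, Nat.eq_of_mul_eq_mul_left hn ?_, hperiod_sq⟩
  exact (card_eq_mul_numCycles hperiod_sq).symm.trans (hcard.trans (mul_comm 2 n))
end

section
/- Let x be an edge of a finite connected Brauer graph G such that x does not lie on a cycle, and neither endpoint condition of Lemma (non-exceptionality) holds: at least one endpoint u of x is such that every path from the other endpoint v avoiding x reaches no vertex on a cycle and no vertex of multiplicity >1. Then the subgraph generated by all such paths from v, together with x and u, is an exceptional subtree of G with connecting vertex u; in particular x is exceptional. -/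
/-!
A Brauer graph is encoded (forgetting the cyclic orderings, which play no role in
these statements) as a finite connected multigraph: a vertex type `V`, an edge type
`E`, an endpoint map `ends : E → Sym2 V`, together with a multiplicity `mult : V → ℕ`.
-/

structure Multigraph (V E : Type) where
  ends : E → Sym2 V

namespace Multigraph

variable {V E : Type}

/-- A walk of length `n` in a multigraph: vertices `vs 0, …, vs n` and edges
`es 0, …, es (n-1)` with `es i` joining `vs i` and `vs (i+1)`. -/
structure Walk (G : Multigraph V E) (n : ℕ) where
  vs : Fin (n + 1) → V
  es : Fin n → E
  ok : ∀ i : Fin n, G.ends (es i) = s(vs i.castSucc, vs i.succ)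

/-- The walk stays inside the subgraph with vertex set `VS` and edge set `ES`. -/
def Walk.inSub {G : Multigraph V E} {n : ℕ} (w : G.Walk n) (VS : Set V) (ES : Set E) :
    Prop :=
  (∀ i, w.vs i ∈ VS) ∧ ∀ i, w.es i ∈ ES

/-- A cycle: a closed walk of positive length with pairwise distinct edges and
pairwise distinct vertices (other than the repeated endpoint). -/
def IsCycleWalk (G : Multigraph V E) {n : ℕ} (w : G.Walk n) : Prop :=
  0 < n ∧ Function.Injective w.es ∧ w.vs (Fin.last n) = w.vs 0 ∧
    ∀ i j : Fin n, w.vs i.castSucc = w.vs j.castSucc → i = j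

def VertexOnCycle (G : Multigraph V E) (v : V) : Prop :=
  ∃ n, ∃ w : G.Walk n, G.IsCycleWalk w ∧ ∃ i, w.vs i = v

def EdgeOnCycle (G : Multigraph V E) (e : E) : Prop :=
  ∃ n, ∃ w : G.Walk n, G.IsCycleWalk w ∧ ∃ i, w.es i = e

/-- The subgraph on `(VS, ES)` is closed (edges of `ES` have endpoints in `VS`)
and any two of its vertices are joined by a walk inside it. -/
def SubConnected (G : Multigraph V E) (VS : Set V) (ES : Set E) : Prop :=
  (∀ e ∈ ES, ∀ v ∈ G.ends e, v ∈ VS) ∧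
    ∀ u ∈ VS, ∀ v ∈ VS, ∃ n, ∃ w : G.Walk n,
      w.inSub VS ES ∧ w.vs 0 = u ∧ w.vs (Fin.last n) = v

def Connected (G : Multigraph V E) : Prop := G.SubConnected Set.univ Set.univ

/-- The subgraph on `(VS, ES)` is a tree: connected and containing no cycle. -/
def IsTreeSub (G : Multigraph V E) (VS : Set V) (ES : Set E) : Prop :=
  G.SubConnected VS ES ∧
    ¬ ∃ n, ∃ w : G.Walk n, G.IsCycleWalk w ∧ w.inSub VS ES

/-- `G` with multiplicities `mult` is a Brauer tree: a tree with at most one vertex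
of multiplicity greater than one. -/
def IsBrauerTree (G : Multigraph V E) (mult : V → ℕ) : Prop :=
  G.IsTreeSub Set.univ Set.univ ∧ {v : V | 1 < mult v}.Subsingleton

/-- An exceptional subtree of a Brauer graph `(G, mult)`: a tree subgraph `(VS, ES)`
with a unique connecting vertex `v` such that the complement `(G \ T) ∪ {v}` is
connected, `T` meets cycles of `G` only possibly at `v`, and every vertex of `T`
other than possibly `v` has multiplicity `1`. -/
structure ExcSubtree (G : Multigraph V E) (mult : V → ℕ) where
  VS : Set V
  ES : Set E
  v : V
  v_mem : v ∈ VS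
  tree : G.IsTreeSub VS ES
  compl_conn : G.SubConnected (VSᶜ ∪ {v}) ESᶜ
  v_unique : ∀ u ∈ VS, G.SubConnected (VSᶜ ∪ {u}) ESᶜ → u = v
  cycles : ∀ u ∈ VS, G.VertexOnCycle u → u = v
  mult_one : ∀ u ∈ VS, u ≠ v → mult u = 1

/-- An edge is exceptional if it belongs to some exceptional subtree. -/
def ExceptionalEdge (G : Multigraph V E) (mult : V → ℕ) (e : E) : Prop :=
  ∃ T : G.ExcSubtree mult, e ∈ T.ES

end Multigraph

/-!
Let `Z` be the set of vertices reachable from `v` without crossing `x`. The only edge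
leaving `Z` is `x`, through its endpoint `u`; and `u ∉ Z`, since otherwise `Z` would be
all of `G`, whose vertices then lie on no cycle and have multiplicity one, making `G` a
Brauer tree. The subgraph `T` spanned by `Z ∪ {u}` and the edges incident to `Z` is a
tree because each of its edges has an endpoint in `Z`, and no vertex of `Z` lies on a
cycle. A walk of `G` between two vertices outside `Z` can only enter and leave `Z`
through `u`, so the complement of `T` together with `u` stays connected. Any other
vertex of `T` lies in `Z`, and no edge outside `T` reaches `Z`, so it cannot serve as
the connecting vertex, unless `T` is all of `G`, which again makes `G` a Brauer tree.
-/

namespace Multigraph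

open Relation

variable {V E : Type} {G : Multigraph V E}

def Adj (G : Multigraph V E) (ES : Set E) (p q : V) : Prop :=
  ∃ e ∈ ES, G.ends e = s(p, q)

instance (ES : Set E) : Std.Symm (G.Adj ES) where
  symm _ _ := fun ⟨e, he, hpq⟩ => ⟨e, he, hpq.trans Sym2.eq_swap⟩

def Walk.nil (G : Multigraph V E) (a : V) : G.Walk 0 where
  vs _ := a
  es := Fin.elim0
  ok i := i.elim0

@[simps]
def Walk.snoc {n : ℕ} (w : G.Walk n) (e : E) (q : V)
    (he : G.ends e = s(w.vs (Fin.last n), q)) : G.Walk (n + 1) where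
  vs := Fin.snoc w.vs q
  es := Fin.snoc w.es e
  ok i := by
    induction i using Fin.lastCases with
    | last => simpa using he
    | cast i => simpa only [Fin.succ_castSucc, Fin.snoc_castSucc] using w.ok i

lemma Walk.snoc_vs_zero {n : ℕ} (w : G.Walk n) (e : E) (q : V)
    (he : G.ends e = s(w.vs (Fin.last n), q)) : (w.snoc e q he).vs 0 = w.vs 0 := by
  rw [Walk.snoc_vs, ← Fin.castSucc_zero, Fin.snoc_castSucc]

lemma Walk.reflTransGen_adj {n : ℕ} (w : G.Walk n) {ES : Set E} (hES : ∀ i, w.es i ∈ ES)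
    (i : Fin (n + 1)) : ReflTransGen (G.Adj ES) (w.vs 0) (w.vs i) := by
  induction i using Fin.induction with
  | zero => rfl
  | succ i ih => exact ih.tail ⟨w.es i, hES i, w.ok i⟩

lemma exists_walk_of_reflTransGen {VS : Set V} {ES : Set E}
    (hclosed : ∀ e ∈ ES, ∀ p ∈ G.ends e, p ∈ VS) {a b : V} (ha : a ∈ VS)
    (h : ReflTransGen (G.Adj ES) a b) :
    ∃ n, ∃ w : G.Walk n, w.inSub VS ES ∧ w.vs 0 = a ∧ w.vs (Fin.last n) = b := by
  induction h with
  | refl => exact ⟨0, Walk.nil G a, ⟨fun _ => ha, fun i => i.elim0⟩, rfl, rfl⟩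
  | @tail b c _ hbc ih =>
    obtain ⟨n, w, ⟨hV, hE⟩, h0, hlast⟩ := ih
    obtain ⟨e, heS, he⟩ := hbc
    refine ⟨n + 1, w.snoc e c (hlast ▸ he), ⟨fun i => ?_, fun i => ?_⟩,
      by rw [Walk.snoc_vs_zero, h0], ?_⟩
    · induction i using Fin.lastCases with
      | last => simpa using hclosed e heS c (he ▸ Sym2.mem_mk_right b c)
      | cast i => simpa using hV i
    · induction i using Fin.lastCases with
      | last => simpa using heS
      | cast i => simpa using hE i
    · simp

lemma subConnected_iff {VS : Set V} {ES : Set E} :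
    G.SubConnected VS ES ↔ (∀ e ∈ ES, ∀ p ∈ G.ends e, p ∈ VS) ∧
      ∀ a ∈ VS, ∀ b ∈ VS, ReflTransGen (G.Adj ES) a b := by
  refine ⟨fun ⟨hclosed, hwalk⟩ => ⟨hclosed, fun a ha b hb => ?_⟩,
    fun ⟨hclosed, hreach⟩ => ⟨hclosed, fun a ha b hb =>
      exists_walk_of_reflTransGen hclosed ha (hreach a ha b hb)⟩⟩
  obtain ⟨n, w, ⟨-, hE⟩, rfl, rfl⟩ := hwalk a ha b hb
  exact w.reflTransGen_adj hE (Fin.last n)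

lemma Connected.reflTransGen (h : G.Connected) (a b : V) :
    ReflTransGen (G.Adj Set.univ) a b :=
  (subConnected_iff.mp h).2 a trivial b trivial

lemma IsCycleWalk.vertexOnCycle_of_mem_ends {n : ℕ} {w : G.Walk n} (hw : G.IsCycleWalk w)
    (i : Fin n) {p : V} (hp : p ∈ G.ends (w.es i)) : G.VertexOnCycle p := by
  rw [w.ok i, Sym2.mem_iff] at hp
  rcases hp with rfl | rfl
  exacts [⟨n, w, hw, _, rfl⟩, ⟨n, w, hw, _, rfl⟩]

def incidentEdges (G : Multigraph V E) (Z : Set V) : Set E :=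
  {e | ∃ p ∈ G.ends e, p ∈ Z}

lemma notMem_incidentEdges {Z : Set V} {e : E} {p q : V} (he : G.ends e = s(p, q))
    (hp : p ∉ Z) (hq : q ∉ Z) : e ∉ G.incidentEdges Z := by
  rintro ⟨r, hr, hrZ⟩
  rw [he, Sym2.mem_iff] at hr
  rcases hr with rfl | rfl <;> contradiction

lemma notMem_of_reflTransGen_compl_incidentEdges {Z : Set V} {a b : V}
    (h : ReflTransGen (G.Adj (G.incidentEdges Z)ᶜ) a b) (ha : a ∉ Z) : b ∉ Z := by
  rcases h.cases_tail with rfl | ⟨c, -, e, he, hcb⟩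
  · exact ha
  · exact fun hb => he ⟨b, hcb ▸ Sym2.mem_mk_right c b, hb⟩

lemma isBrauerTree_of_forall_mem_incidentEdges {mult : V → ℕ} {Z : Set V}
    (hconn : G.Connected) (hZ : ∀ z ∈ Z, ¬ G.VertexOnCycle z ∧ mult z = 1)
    (hE : ∀ e, e ∈ G.incidentEdges Z) (hV : Zᶜ.Subsingleton) : G.IsBrauerTree mult := by
  refine ⟨⟨hconn, ?_⟩, hV.anti fun p hp hpZ => ?_⟩
  · rintro ⟨n, w, hw, -⟩
    obtain ⟨p, hp, hpZ⟩ := hE (w.es ⟨0, hw.1⟩)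
    exact (hZ p hpZ).1 (hw.vertexOnCycle_of_mem_ends _ hp)
  · exact absurd (hZ p hpZ).2 (ne_of_gt hp)

def avoidReach (G : Multigraph V E) (x : E) (v : V) : Set V :=
  {z | ReflTransGen (G.Adj {x}ᶜ) v z}

section avoidReach

variable {x e : E} {u v p q : V}

lemma self_mem_avoidReach : v ∈ G.avoidReach x v := ReflTransGen.refl

lemma mem_avoidReach_of_ends_eq (hex : e ≠ x) (he : G.ends e = s(p, q))
    (hp : p ∈ G.avoidReach x v) : q ∈ G.avoidReach x v :=
  ReflTransGen.tail hp ⟨e, hex, he⟩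

lemma mem_avoidReach_of_mem_incidentEdges (hex : e ≠ x)
    (he : e ∈ G.incidentEdges (G.avoidReach x v)) (hp : p ∈ G.ends e) :
    p ∈ G.avoidReach x v := by
  obtain ⟨q, hq, hqZ⟩ := he
  obtain ⟨r, hr⟩ := Sym2.mem_iff_exists.mp hq
  rw [hr, Sym2.mem_iff] at hp
  rcases hp with rfl | rfl
  exacts [hqZ, mem_avoidReach_of_ends_eq hex hr hqZ]

lemma eq_of_ends_eq_of_mem_avoidReach (hends : G.ends x = s(u, v)) (he : G.ends e = s(p, q))
    (hp : p ∈ G.avoidReach x v) (hq : q ∉ G.avoidReach x v) : q = u := by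
  by_cases hex : e = x
  · rw [hex, hends, Sym2.eq_iff] at he
    rcases he with ⟨-, rfl⟩ | ⟨rfl, -⟩
    · exact absurd self_mem_avoidReach hq
    · rfl
  · exact absurd (mem_avoidReach_of_ends_eq hex he hp) hq

lemma setOf_walk_vertex_eq_avoidReach :
    {z : V | ∃ n, ∃ w : G.Walk n, w.vs 0 = v ∧ (∀ i, w.es i ≠ x) ∧ ∃ i, w.vs i = z} =
      G.avoidReach x v := by
  ext z
  constructor
  · rintro ⟨n, w, rfl, hx, i, rfl⟩
    exact w.reflTransGen_adj hx i
  · intro hz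
    obtain ⟨n, w, ⟨-, hE⟩, h0, hlast⟩ :=
      exists_walk_of_reflTransGen (VS := Set.univ) (fun _ _ _ _ => trivial) trivial hz
    exact ⟨n, w, h0, hE, _, hlast⟩

lemma union_setOf_walk_edge_eq_incidentEdges (hv : v ∈ G.ends x) :
    {x} ∪ {e : E | ∃ n, ∃ w : G.Walk n, w.vs 0 = v ∧ (∀ i, w.es i ≠ x) ∧
      ∃ i, w.es i = e} = G.incidentEdges (G.avoidReach x v) := by
  ext e
  constructor
  · rintro (rfl | ⟨n, w, rfl, hx, i, rfl⟩)
    · exact ⟨_, hv, self_mem_avoidReach⟩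
    · exact ⟨_, w.ok i ▸ Sym2.mem_mk_left _ _, w.reflTransGen_adj hx i.castSucc⟩
  · rintro ⟨p, hp, hpZ⟩
    by_cases hex : e = x
    · exact Or.inl hex
    obtain ⟨q, hq⟩ := Sym2.mem_iff_exists.mp hp
    obtain ⟨n, w, ⟨-, hE⟩, h0, hlast⟩ :=
      exists_walk_of_reflTransGen (VS := Set.univ) (fun _ _ _ _ => trivial) trivial hpZ
    refine Or.inr ⟨n + 1, w.snoc e q (hlast ▸ hq), by rw [Walk.snoc_vs_zero, h0],
      fun i => ?_, Fin.last n, by simp⟩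
    induction i using Fin.lastCases with
    | last => simpa using hex
    | cast i => simpa using hE i

end avoidReach

section excSubtree

variable {mult : V → ℕ} {x : E} {u v : V}

lemma isTreeSub_avoidReach (hends : G.ends x = s(u, v))
    (hcyc : ∀ z ∈ G.avoidReach x v, ¬ G.VertexOnCycle z) :
    G.IsTreeSub ({u} ∪ G.avoidReach x v) (G.incidentEdges (G.avoidReach x v)) := by
  set Z := G.avoidReach x v
  have hxI : x ∈ G.incidentEdges Z :=
    ⟨v, hends ▸ Sym2.mem_mk_right u v, self_mem_avoidReach⟩
  have hreach : ∀ a ∈ {u} ∪ Z, ReflTransGen (G.Adj (G.incidentEdges Z)) v a := by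
    rintro a (rfl | ha)
    · exact .single ⟨x, hxI, hends.trans Sym2.eq_swap⟩
    · induction ha with
      | refl => rfl
      | @tail b c hb hbc ih =>
        obtain ⟨e, -, he⟩ := hbc
        exact ih.tail ⟨e, ⟨b, he ▸ Sym2.mem_mk_left b c, hb⟩, he⟩
  have hclosed : ∀ e ∈ G.incidentEdges Z, ∀ p ∈ G.ends e, p ∈ {u} ∪ Z := by
    intro e he p hp
    by_cases hex : e = x
    · rw [hex, hends, Sym2.mem_iff] at hp
      rcases hp with rfl | rfl
      exacts [Or.inl rfl, Or.inr self_mem_avoidReach]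
    · exact Or.inr (mem_avoidReach_of_mem_incidentEdges hex he hp)
  refine ⟨subConnected_iff.mpr ⟨hclosed, fun a ha b hb => (symm (hreach a ha)).trans
    (hreach b hb)⟩, ?_⟩
  rintro ⟨n, w, hw, -, hE⟩
  obtain ⟨p, hp, hpZ⟩ := hE ⟨0, hw.1⟩
  exact hcyc p hpZ (hw.vertexOnCycle_of_mem_ends _ hp)

lemma notMem_avoidReach (hconn : G.Connected) (hnt : ¬ G.IsBrauerTree mult)
    (hends : G.ends x = s(u, v))
    (hZ : ∀ z ∈ G.avoidReach x v, ¬ G.VertexOnCycle z ∧ mult z = 1) :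
    u ∉ G.avoidReach x v := by
  intro hu
  have hall : ∀ p, p ∈ G.avoidReach x v := by
    intro p
    induction hconn.reflTransGen v p with
    | refl => exact self_mem_avoidReach
    | @tail b c _ hbc hb =>
      obtain ⟨e, -, he⟩ := hbc
      by_contra hc
      exact hc (eq_of_ends_eq_of_mem_avoidReach hends he hb hc ▸ hu)
  exact hnt (isBrauerTree_of_forall_mem_incidentEdges hconn hZ
    (fun e => ⟨_, Sym2.out_fst_mem _, hall _⟩) fun p hp => absurd (hall p) hp)

lemma reflTransGen_compl_incidentEdges_or (hends : G.ends x = s(u, v)) {a c : V}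
    (ha : a ∉ G.avoidReach x v) (h : ReflTransGen (G.Adj Set.univ) a c) :
    ReflTransGen (G.Adj (G.incidentEdges (G.avoidReach x v))ᶜ) a c ∨
      c ∈ G.avoidReach x v ∧
        ReflTransGen (G.Adj (G.incidentEdges (G.avoidReach x v))ᶜ) a u := by
  induction h with
  | refl => exact Or.inl .refl
  | @tail b c _ hbc ih =>
    obtain ⟨e, -, he⟩ := hbc
    by_cases hc : c ∈ G.avoidReach x v
    · refine Or.inr ⟨hc, ?_⟩
      rcases ih with hab | ⟨-, hau⟩
      · have hb := notMem_of_reflTransGen_compl_incidentEdges hab ha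
        rwa [← eq_of_ends_eq_of_mem_avoidReach hends (he.trans Sym2.eq_swap) hc hb]
      · exact hau
    · rcases ih with hab | ⟨hb, hau⟩
      · have hb := notMem_of_reflTransGen_compl_incidentEdges hab ha
        exact Or.inl (hab.tail ⟨e, notMem_incidentEdges he hb hc, he⟩)
      · rw [eq_of_ends_eq_of_mem_avoidReach hends he hb hc]
        exact Or.inl hau

lemma subConnected_compl_avoidReach (hconn : G.Connected) (hends : G.ends x = s(u, v))
    (hu : u ∉ G.avoidReach x v) :
    G.SubConnected (({u} ∪ G.avoidReach x v)ᶜ ∪ {u})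
      (G.incidentEdges (G.avoidReach x v))ᶜ := by
  have hVS : ({u} ∪ G.avoidReach x v)ᶜ ∪ {u} = (G.avoidReach x v)ᶜ := by
    ext p
    by_cases hp : p = u <;> simp [hp, hu]
  rw [hVS, subConnected_iff]
  refine ⟨fun e he p hp hpZ => he ⟨p, hp, hpZ⟩, fun a ha b hb => ?_⟩
  exact (reflTransGen_compl_incidentEdges_or hends ha (hconn.reflTransGen a b)).resolve_right
    (hb ·.1)

lemma eq_of_subConnected_compl_avoidReach (hconn : G.Connected) (hnt : ¬ G.IsBrauerTree mult)
    (hZ : ∀ z ∈ G.avoidReach x v, ¬ G.VertexOnCycle z ∧ mult z = 1) :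
    ∀ u' ∈ {u} ∪ G.avoidReach x v,
      G.SubConnected (({u} ∪ G.avoidReach x v)ᶜ ∪ {u'})
          (G.incidentEdges (G.avoidReach x v))ᶜ →
        u' = u := by
  rintro u' (rfl | hu'Z) h
  · rfl
  obtain ⟨hclosed, hreach⟩ := subConnected_iff.mp h
  by_cases hcover : ∀ p, p ∈ {u} ∪ G.avoidReach x v
  · refine absurd (isBrauerTree_of_forall_mem_incidentEdges hconn hZ (fun e => ?_) ?_) hnt
    · by_contra he
      rcases hclosed e he _ (Sym2.out_fst_mem _) with hout | rfl
      · exact hout (hcover _)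
      · exact he ⟨_, Sym2.out_fst_mem _, hu'Z⟩
    · exact (Set.subsingleton_singleton (a := u)).anti fun p hp => (hcover p).resolve_right hp
  · obtain ⟨z, hz⟩ := not_forall.mp hcover
    exact absurd hu'Z (notMem_of_reflTransGen_compl_incidentEdges
      (hreach z (Or.inl hz) u' (Or.inr rfl)) (fun hzZ => hz (Or.inr hzZ)))

def avoidReachExcSubtree (hconn : G.Connected) (hnt : ¬ G.IsBrauerTree mult)
    (hends : G.ends x = s(u, v))
    (hZ : ∀ z ∈ G.avoidReach x v, ¬ G.VertexOnCycle z ∧ mult z = 1) : G.ExcSubtree mult where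
  VS := {u} ∪ G.avoidReach x v
  ES := G.incidentEdges (G.avoidReach x v)
  v := u
  v_mem := Or.inl rfl
  tree := isTreeSub_avoidReach hends fun z hz => (hZ z hz).1
  compl_conn := subConnected_compl_avoidReach hconn hends (notMem_avoidReach hconn hnt hends hZ)
  v_unique := eq_of_subConnected_compl_avoidReach hconn hnt hZ
  cycles := by
    rintro p (rfl | hp) hcyc
    exacts [rfl, absurd hcyc (hZ p hp).1]
  mult_one := by
    rintro p (rfl | hp) hne
    exacts [absurd rfl hne, (hZ p hp).2]

end excSubtree

end Multigraph

open Multigraph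

theorem exceptional_subtree_generated_by_paths_general
    (V E : Type) (G : Multigraph V E) (mult : V → ℕ)
    (hconn : G.Connected)
    (hnt : ¬ G.IsBrauerTree mult)
    (x : E) (u v : V) (hends : G.ends x = s(u, v))
    (havoid : ∀ n, ∀ w : G.Walk n, w.vs 0 = v → (∀ i, w.es i ≠ x) →
      ∀ i, ¬ G.VertexOnCycle (w.vs i) ∧ mult (w.vs i) = 1) :
    (∃ T : G.ExcSubtree mult,
      T.v = u ∧
      T.VS = {u} ∪ {z : V | ∃ n, ∃ w : G.Walk n, w.vs 0 = v ∧
        (∀ i, w.es i ≠ x) ∧ ∃ i, w.vs i = z} ∧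
      T.ES = {x} ∪ {e : E | ∃ n, ∃ w : G.Walk n, w.vs 0 = v ∧
        (∀ i, w.es i ≠ x) ∧ ∃ i, w.es i = e}) ∧
    G.ExceptionalEdge mult x := by
  have hZ : ∀ z ∈ G.avoidReach x v, ¬ G.VertexOnCycle z ∧ mult z = 1 := by
    rw [← setOf_walk_vertex_eq_avoidReach]
    rintro _ ⟨n, w, h0, hx, i, rfl⟩
    exact havoid n w h0 hx i
  have hv : v ∈ G.ends x := hends ▸ Sym2.mem_mk_right u v
  let T := avoidReachExcSubtree hconn hnt hends hZ
  refine ⟨⟨T, rfl, ?_, (union_setOf_walk_edge_eq_incidentEdges hv).symm⟩,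
    T, v, hv, self_mem_avoidReach⟩
  rw [setOf_walk_vertex_eq_avoidReach]
  rfl

/-- Let `x` be an edge of a finite connected Brauer graph `G` (not a
Brauer tree) with endpoints `u` and `v`, such that `x` does not lie on a cycle and
every walk from `v` avoiding `x` reaches no vertex on a cycle and no vertex of
multiplicity `> 1`.  Then the subgraph generated by all walks from `v` avoiding `x`,
together with `x` and `u`, is an exceptional subtree of `G` with connecting vertex
`u`; in particular `x` is exceptional. -/
theorem exceptional_subtree_generated_by_paths
    (V E : Type) [Fintype V] [Fintype E] (G : Multigraph V E) (mult : V → ℕ)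
    (hmult : ∀ v, 1 ≤ mult v) (hconn : G.Connected)
    (hnt : ¬ G.IsBrauerTree mult)
    (x : E) (u v : V) (hends : G.ends x = s(u, v))
    (hnc : ¬ G.EdgeOnCycle x)
    (havoid : ∀ n, ∀ w : G.Walk n, w.vs 0 = v → (∀ i, w.es i ≠ x) →
      ∀ i, ¬ G.VertexOnCycle (w.vs i) ∧ mult (w.vs i) = 1) :
    (∃ T : G.ExcSubtree mult,
      T.v = u ∧
      T.VS = {u} ∪ {z : V | ∃ n, ∃ w : G.Walk n, w.vs 0 = v ∧
        (∀ i, w.es i ≠ x) ∧ ∃ i, w.vs i = z} ∧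
      T.ES = {x} ∪ {e : E | ∃ n, ∃ w : G.Walk n, w.vs 0 = v ∧
        (∀ i, w.es i ≠ x) ∧ ∃ i, w.es i = e}) ∧
    G.ExceptionalEdge mult x :=
  exceptional_subtree_generated_by_paths_general V E G mult hconn hnt x u v hends havoid
end
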